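/- arXiv:2008.11637 — 3 statements merged into one kernel-verified Lean document; each statement's English description precedes it below -/
import Mathlib

section
/- Let R be a commutative ring, ell ≥ 1 and j ≥ 1 integers, and alpha_2, alpha_3, ... elements of R. Set t_1 = t + sum_{i≥2} alpha_i t^i (a polynomial, taking finitely many alpha_i nonzero, say alpha_i = 0 for i > j+1). Then the coefficient of t^{ell + j} in t_1^ell equals ell * alpha_{j+1} + P(alpha_2, ..., alpha_j), where P is a polynomial expression (with integer coefficients) depending only on ell and j in the variables alpha_2, ..., alpha_j. In particular, the coefficient of t^{ell+j} in t_1^ell, viewed as a function of alpha_{j+1} with alpha_2, ..., alpha_j fixed, is affine with slope ell. -/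
/-!
Factor `t₁ = t * (u + α_{j+1} t^j)` with `u = 1 + α₂ t + ⋯ + α_j t^(j-1)`, so the wanted
coefficient is that of `t^j` in `(u + α_{j+1} t^j)^ℓ`. In the binomial expansion only the terms
of degree `0` and `1` in `α_{j+1} t^j` reach `t^j`; they contribute `[t^j] u^ℓ` and, as `u(0) = 1`,
`ℓ α_{j+1}`. Computing `[t^j] u^ℓ` over the universal ring `ℤ[α₂, …, α_j]` gives `P`.
-/

section

open Polynomial Finset

theorem coeff_add_X_pow_mul_pow {R : Type*} [CommRing R] (p q : R[X]) {j : ℕ} (hj : 0 < j)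
    (ℓ : ℕ) :
    ((p + X ^ j * q) ^ ℓ).coeff j = (p ^ ℓ).coeff j + ℓ * p.coeff 0 ^ (ℓ - 1) * q.coeff 0 := by
  obtain _ | m := ℓ
  · simp
  have quadratic : ∀ k, ((X ^ j * q) ^ (k + 2) * p ^ (m + 1 - (k + 2)) *
      ((m + 1).choose (k + 2) : R[X])).coeff j = 0 := fun k => by
    rw [mul_pow, ← pow_mul, mul_assoc, mul_assoc, coeff_X_pow_mul', if_neg (by nlinarith)]
  have linear : ((X ^ j * q) ^ 1 * p ^ (m + 1 - 1) * ((m + 1).choose 1 : R[X])).coeff j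
      = (m + 1 : ℕ) * p.coeff 0 ^ m * q.coeff 0 := by
    rw [pow_one, mul_assoc, mul_assoc, coeff_X_pow_mul', if_pos le_rfl, Nat.sub_self]
    simp [coeff_zero_eq_eval_zero]
    ring
  rw [add_comm, add_pow, finsetSum_coeff, sum_range_succ', sum_range_succ', linear]
  simp only [quadratic, sum_const_zero, zero_add, pow_zero, one_mul, Nat.sub_zero,
    Nat.choose_zero_right, Nat.cast_one, mul_one, add_tsub_cancel_right]
  ring

variable {S : Type*} [CommRing S]

noncomputable def unitSeries (j : ℕ) (β : ℕ → S) : S[X] :=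
  1 + ∑ i ∈ Icc 2 j, C (β i) * X ^ (i - 1)

theorem coeff_zero_unitSeries (j : ℕ) (β : ℕ → S) : (unitSeries j β).coeff 0 = 1 := by
  simp only [unitSeries, coeff_add, coeff_one_zero, finsetSum_coeff, coeff_C_mul_X_pow]
  rw [sum_eq_zero fun i hi => if_neg (by grind), add_zero]

theorem map_unitSeries {R : Type*} [CommRing R] (f : S →+* R) (j : ℕ) (β : ℕ → S) (α : ℕ → R)
    (hβ : ∀ i ∈ Icc 2 j, f (β i) = α i) : (unitSeries j β).map f = unitSeries j α := by
  simp only [unitSeries, Polynomial.map_add, Polynomial.map_one, Polynomial.map_sum,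
    Polynomial.map_mul, Polynomial.map_pow, map_C, map_X]
  exact congrArg _ (sum_congr rfl fun i hi => by rw [hβ i hi])

theorem X_mul_unitSeries_add {j : ℕ} (hj : 1 ≤ j) (α : ℕ → S) :
    X * (unitSeries j α + X ^ j * C (α (j + 1))) = X + ∑ i ∈ Icc 2 (j + 1), C (α i) * X ^ i := by
  have shift : X * ∑ i ∈ Icc 2 j, C (α i) * X ^ (i - 1) = ∑ i ∈ Icc 2 j, C (α i) * X ^ i :=
    (mul_sum _ _ _).trans <| sum_congr rfl fun i hi => by
      rw [mul_left_comm, ← pow_succ', Nat.sub_add_cancel (by grind)]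
  rw [sum_Icc_succ_top (by omega), unitSeries, mul_add, mul_add, shift]
  ring

end

theorem stmt3_general (R : Type*) [CommRing R] (ℓ j : ℕ) (hj : 1 ≤ j) :
    ∃ P : MvPolynomial (Finset.Icc 2 j) ℤ,
      ∀ α : ℕ → R,
        (((Polynomial.X + ∑ i ∈ Finset.Icc 2 (j + 1),
            Polynomial.C (α i) * Polynomial.X ^ i : Polynomial R)) ^ ℓ).coeff (ℓ + j)
          = (ℓ : R) * α (j + 1) + MvPolynomial.aeval (fun i => α i.1) P := by
  let generic : ℕ → MvPolynomial (Finset.Icc 2 j) ℤ := fun i =>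
    if h : i ∈ Finset.Icc 2 j then MvPolynomial.X ⟨i, h⟩ else 0
  refine ⟨((unitSeries j generic) ^ ℓ).coeff j, fun α => ?_⟩
  have map_generic : (unitSeries j generic).map (MvPolynomial.aeval fun i => α i.1).toRingHom
      = unitSeries j α :=
    map_unitSeries _ _ _ _ fun i hi => by simp only [generic, dif_pos hi]; simp
  rw [← X_mul_unitSeries_add hj, mul_pow, add_comm ℓ j, Polynomial.coeff_X_pow_mul,
    coeff_add_X_pow_mul_pow _ _ hj, coeff_zero_unitSeries, Polynomial.coeff_C_zero, one_pow, mul_one,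
    add_comm, ← map_generic, ← Polynomial.map_pow, Polynomial.coeff_map]
  rfl

theorem stmt3 (R : Type*) [CommRing R] (ℓ j : ℕ) (hℓ : 1 ≤ ℓ) (hj : 1 ≤ j) :
    ∃ P : MvPolynomial (Finset.Icc 2 j) ℤ,
      ∀ α : ℕ → R,
        (((Polynomial.X + ∑ i ∈ Finset.Icc 2 (j + 1),
            Polynomial.C (α i) * Polynomial.X ^ i : Polynomial R)) ^ ℓ).coeff (ℓ + j)
          = (ℓ : R) * α (j + 1) + MvPolynomial.aeval (fun i => α i.1) P :=
  stmt3_general R ℓ j hj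
end

section
/- Let k be a finite field of characteristic p, m ≥ 2 an integer with p > m, f in k[x_1,...,x_n], and denote by f_0, ..., f_{m-1} the jet polynomials of f in the variables x^{(m-1)} = (x_{ij})_{0≤i≤m-1, 1≤j≤n}. Then for any a_{-m}, ..., a_{-1} in k with a_{-m} ≠ 0, there exist b_0 in k and b_{m-1} in k^* such that for every finite extension k' of k and every point x^{(m-1)} in (k')^{mn}: Tr_{k'/F_p}( sum_{i=0}^{m-1} a_{-i-1} f_i(x^{(i)}) ) computed in the reparameterized coordinates equals Tr_{k'/F_p}( b_0 f_0(x^{(0)}) + b_{m-1} f_{m-1}(x^{(m-1)}) ) after composing with an explicit polynomial automorphism of affine mn-space over k. More precisely: there exists a polynomial automorphism Theta of A^{mn}_k commuting with the projection to the level-0 coordinates, and b_0 in k, b_{m-1} in k^*, such that (sum_{i=0}^{m-1} a_{-i-1} f_i) ∘ Theta = b_0 f_0 + b_{m-1} f_{m-1} as polynomials. -/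
/-- The `ℓ`-th jet polynomial `f_ℓ` of `f ∈ R[x_1,…,x_n]`: the coefficient of `t^ℓ` in
`f(∑_i x_{i1} t^i, …, ∑_i x_{in} t^i)`, a polynomial in the variables
`x_{ij}`, `0 ≤ i ≤ m-1`, `1 ≤ j ≤ n`. -/
noncomputable def jetCoeff {R : Type*} [CommRing R] (m n : ℕ)
    (f : MvPolynomial (Fin n) R) (ℓ : ℕ) : MvPolynomial (Fin m × Fin n) R :=
  (MvPolynomial.aeval
      (fun j : Fin n =>
        ∑ i : Fin m, Polynomial.C (MvPolynomial.X (i, j)) * Polynomial.X ^ (i : ℕ)) f :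
    Polynomial (MvPolynomial (Fin m × Fin n) R)).coeff ℓ

/-!
Substituting `t ↦ φ(t)` with `φ = t + O(t²)` in the generic jet `∑ᵢ xᵢ tⁱ` amounts, modulo
`t^m`, to the linear change of jet coordinates `x_ℓ ↦ ∑ᵢ [t^ℓ] φⁱ · xᵢ`. Its matrix is
unitriangular, so this is an automorphism fixing `x₀`, and it sends `f_ℓ` to
`∑ᵢ [t^ℓ] φⁱ · fᵢ`. Hence `∑ A_ℓ f_ℓ` becomes `∑ᵢ Res(a φⁱ dt) · fᵢ` with
`a = ∑ A_ℓ t^(-ℓ-1)`; these residues are `A₀` for `i = 0` and `A_{m-1}` for `i = m-1`. The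
residues for `0 < i < m-1` are killed from `i = m-2` down to `i = 1`: adding `α t^(m-i)` to `φ`
shifts the residue of `φⁱ` by `i α A_{m-1}` and leaves those of higher powers unchanged, and `i`
is invertible because `p > m`.
-/

open Polynomial Finset

namespace Polynomial

variable {R : Type*} [CommRing R] {φ : R[X]}

lemma coeff_zero_pow (ψ : R[X]) (i : ℕ) : (ψ ^ i).coeff 0 = ψ.coeff 0 ^ i := by
  simp only [coeff_zero_eq_eval_zero, eval_pow]

lemma coeff_pow_eq_zero_of_lt (h0 : φ.coeff 0 = 0) {i ℓ : ℕ} (h : ℓ < i) :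
    (φ ^ i).coeff ℓ = 0 :=
  X_pow_dvd_iff.mp (pow_dvd_pow_of_dvd (X_dvd_iff.mpr h0) i) ℓ h

lemma coeff_pow_self (h0 : φ.coeff 0 = 0) (i : ℕ) : (φ ^ i).coeff i = φ.coeff 1 ^ i := by
  obtain ⟨ψ, rfl⟩ := X_dvd_iff.mpr h0
  rw [mul_pow, coeff_X_pow_mul', if_pos le_rfl, Nat.sub_self, coeff_zero_pow, ← coeff_X_mul]

lemma X_pow_dvd_add_C_mul_X_pow_pow_sub (h0 : φ.coeff 0 = 0) (h1 : φ.coeff 1 = 1) (α : R)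
    {m s i : ℕ} (hs : 2 ≤ s) (hm : m ≤ i + s) :
    X ^ m ∣ (φ + C α * X ^ s) ^ i - φ ^ i - C (i * α) * X ^ (i + s - 1) := by
  obtain ⟨ψ, rfl⟩ := X_dvd_iff.mpr h0
  obtain ⟨s, rfl⟩ : ∃ r, s = r + 1 := ⟨s - 1, by omega⟩
  have hψ : X ∣ ψ ^ (i - 1) - 1 := by
    rw [X_dvd_iff, coeff_sub, coeff_zero_pow, ← coeff_X_mul, h1]
    simp
  have key : (X * ψ + C α * X ^ (s + 1)) ^ i - (X * ψ) ^ i - C (i * α) * X ^ (i + (s + 1) - 1)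
      = X ^ i * ((ψ + C α * X ^ s) ^ i - ψ ^ (i - 1) * (C α * X ^ s) * (i : R[X]) - ψ ^ i)
        + C (i * α) * X ^ (i + s) * (ψ ^ (i - 1) - 1) := by
    rw [show X * ψ + C α * X ^ (s + 1) = X * (ψ + C α * X ^ s) by ring, mul_pow, mul_pow,
      show i + (s + 1) - 1 = i + s by omega, map_mul, map_natCast]
    ring
  rw [key]
  refine dvd_add ?_ ?_
  · obtain ⟨q, hq⟩ := sq_dvd_add_pow_sub_sub (C α * X ^ s) ψ i
    rw [hq]
    exact (pow_dvd_pow X (by omega : m ≤ i + 2 * s)).trans ⟨C α ^ 2 * q, by ring⟩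
  · rw [mul_assoc]
    refine dvd_mul_of_dvd_right ((pow_dvd_pow X (by omega : m ≤ i + s + 1)).trans ?_) _
    rw [pow_succ]
    exact mul_dvd_mul_left _ hψ

lemma coeff_add_C_mul_X_pow_pow (h0 : φ.coeff 0 = 0) (h1 : φ.coeff 1 = 1) (α : R)
    {m s i ℓ : ℕ} (hs : 2 ≤ s) (hm : m ≤ i + s) (hℓ : ℓ < m) :
    ((φ + C α * X ^ s) ^ i).coeff ℓ
      = (φ ^ i).coeff ℓ + if ℓ = i + s - 1 then i * α else 0 := by
  have h := X_pow_dvd_iff.mp (X_pow_dvd_add_C_mul_X_pow_pow_sub h0 h1 α hs hm) ℓ hℓ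
  rw [coeff_sub, coeff_sub, coeff_C_mul_X_pow] at h
  linear_combination h

lemma coeff_comp_map_of_lt {S : Type*} [CommRing S] [Algebra R S]
    (h0 : φ.coeff 0 = 0) (G : S[X]) {m ℓ : ℕ} (hℓ : ℓ < m) :
    (G.comp (φ.map (algebraMap R S))).coeff ℓ
      = ∑ i ∈ range m, (φ ^ i).coeff ℓ • G.coeff i := by
  induction G using Polynomial.induction_on' with
  | add G H hG hH => simp only [add_comp, coeff_add, hG, hH, smul_add, sum_add_distrib]
  | monomial d a =>
    simp only [monomial_comp, ← Polynomial.map_pow, coeff_C_mul, coeff_map, coeff_monomial,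
      smul_ite, smul_zero, sum_ite_eq, mem_range]
    split_ifs with hd
    · rw [Algebra.smul_def, mul_comm]
    · rw [coeff_pow_eq_zero_of_lt h0 (by omega), map_zero, mul_zero]

end Polynomial

/-- The residue of `a(t) φ(t)^i dt` for `a(t) = ∑_{ℓ<m} A ℓ t^(-ℓ-1)`. -/
noncomputable def residuePow {R : Type*} [CommRing R] (A : ℕ → R) (m : ℕ) (φ : R[X]) (i : ℕ) :
    R :=
  ∑ ℓ ∈ range m, A ℓ * (φ ^ i).coeff ℓ

section Residue

variable {R : Type*} [CommRing R] {φ : R[X]} (A : ℕ → R) {m : ℕ}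

lemma residuePow_add_C_mul_X_pow (h0 : φ.coeff 0 = 0) (h1 : φ.coeff 1 = 1) (α : R)
    {s i : ℕ} (hs : 2 ≤ s) (hm : m ≤ i + s) :
    residuePow A m (φ + C α * X ^ s) i
      = residuePow A m φ i + if i + s = m then A (m - 1) * (i * α) else 0 := by
  rw [residuePow, sum_congr rfl fun ℓ hℓ => by
    rw [coeff_add_C_mul_X_pow_pow h0 h1 α hs hm (mem_range.mp hℓ), mul_add], sum_add_distrib]
  simp_rw [mul_ite, mul_zero]
  rw [sum_ite_eq', residuePow]
  by_cases h : i + s = m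
  · rw [if_pos (mem_range.mpr (by omega)), if_pos h, show i + s - 1 = m - 1 by omega]
  · rw [if_neg (by rw [mem_range]; omega), if_neg h]

lemma residuePow_zero (hm : 0 < m) : residuePow A m φ 0 = A 0 := by
  simp [residuePow, coeff_one, hm]

lemma residuePow_sub_one (h0 : φ.coeff 0 = 0) (h1 : φ.coeff 1 = 1) (hm : 0 < m) :
    residuePow A m φ (m - 1) = A (m - 1) := by
  rw [residuePow, sum_eq_single (m - 1), coeff_pow_self h0, h1, one_pow, mul_one]
  · intro ℓ hℓ hne
    rw [coeff_pow_eq_zero_of_lt h0 (by rw [mem_range] at hℓ; omega), mul_zero]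
  · simp; omega

end Residue

lemma exists_residuePow_eq_zero {K : Type*} [Field K] {m : ℕ} (A : ℕ → K) (hA : A (m - 1) ≠ 0)
    (hchar : ∀ i : ℕ, 0 < i → i < m → (i : K) ≠ 0) :
    ∃ φ : K[X], φ.coeff 0 = 0 ∧ φ.coeff 1 = 1 ∧
      ∀ i, 0 < i → i < m - 1 → residuePow A m φ i = 0 := by
  suffices h : ∀ d ≤ m - 2, ∃ φ : K[X], φ.coeff 0 = 0 ∧ φ.coeff 1 = 1 ∧
      ∀ i, 0 < i → m - 1 ≤ i + d → i < m - 1 → residuePow A m φ i = 0 from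
    (h (m - 2) le_rfl).imp fun φ ⟨h0, h1, hφ⟩ =>
      ⟨h0, h1, fun i hi hi' => hφ i hi (by omega) hi'⟩
  intro d
  induction d with
  | zero => exact fun _ => ⟨X, by simp, by simp, fun i _ h h' => by omega⟩
  | succ d ih =>
    intro hd
    obtain ⟨φ, h0, h1, hφ⟩ := ih (by omega)
    set i₀ := m - (d + 2)
    have hi₀ : (i₀ : K) ≠ 0 := hchar i₀ (by omega) (by omega)
    refine ⟨φ + C (-residuePow A m φ i₀ / (A (m - 1) * i₀)) * X ^ (d + 2), by simp [h0],
      by simp [h1], fun i hi hdi hi' => ?_⟩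
    rw [residuePow_add_C_mul_X_pow A h0 h1 _ (by omega) (by omega : m ≤ i + (d + 2))]
    by_cases h : i + (d + 2) = m
    · obtain rfl : i = i₀ := by omega
      rw [if_pos h]
      field_simp
      ring
    · rw [if_neg h, hφ i hi (by omega) hi', add_zero]

lemma MvPolynomial.aeval_sub_aeval_mem {R S σ : Type*} [CommRing R] [CommRing S] [Algebra R S]
    {I : Ideal S} {u v : σ → S} (h : ∀ j, u j - v j ∈ I) (f : MvPolynomial σ R) :
    MvPolynomial.aeval u f - MvPolynomial.aeval v f ∈ I := by
  rw [← Ideal.Quotient.eq, ← Ideal.Quotient.mkₐ_eq_mk R, MvPolynomial.comp_aeval_apply,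
    MvPolynomial.comp_aeval_apply]
  congr 2 with j
  exact Ideal.Quotient.eq.mpr (h j)

section Jets

variable {R : Type*} [CommRing R] {m n : ℕ}

noncomputable def jetCurve (m n : ℕ) (j : Fin n) : (MvPolynomial (Fin m × Fin n) R)[X] :=
  ∑ i : Fin m, C (MvPolynomial.X (i, j)) * X ^ (i : ℕ)

lemma jetCoeff_eq_coeff_aeval (f : MvPolynomial (Fin n) R) (ℓ : ℕ) :
    jetCoeff m n f ℓ = (MvPolynomial.aeval (jetCurve m n) f).coeff ℓ :=
  rfl

noncomputable def jetSubst (M : Matrix (Fin m) (Fin m) R) :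
    MvPolynomial (Fin m × Fin n) R →ₐ[R] MvPolynomial (Fin m × Fin n) R :=
  MvPolynomial.aeval fun q => ∑ i, M q.1 i • MvPolynomial.X (i, q.2)

lemma jetSubst_X (M : Matrix (Fin m) (Fin m) R) (q : Fin m × Fin n) :
    jetSubst M (MvPolynomial.X q) = ∑ i, M q.1 i • MvPolynomial.X (i, q.2) :=
  MvPolynomial.aeval_X _ _

lemma jetSubst_comp_jetSubst (M N : Matrix (Fin m) (Fin m) R) :
    (jetSubst (n := n) M).comp (jetSubst N) = jetSubst (N * M) := by
  refine MvPolynomial.algHom_ext fun q => ?_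
  simp only [AlgHom.comp_apply, jetSubst_X, map_sum, map_smul, Matrix.mul_apply, sum_smul,
    smul_sum, smul_smul]
  rw [sum_comm]

lemma jetSubst_one : jetSubst (n := n) (1 : Matrix (Fin m) (Fin m) R) = AlgHom.id R _ := by
  refine MvPolynomial.algHom_ext fun q => ?_
  simp [jetSubst_X, Matrix.one_apply]

noncomputable def jetSubstEquiv (M : (Matrix (Fin m) (Fin m) R)ˣ) :
    MvPolynomial (Fin m × Fin n) R ≃ₐ[R] MvPolynomial (Fin m × Fin n) R :=
  AlgEquiv.ofAlgHom (jetSubst M) (jetSubst ↑M⁻¹)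
    (by rw [jetSubst_comp_jetSubst, Units.inv_mul, jetSubst_one])
    (by rw [jetSubst_comp_jetSubst, Units.mul_inv, jetSubst_one])

noncomputable def powCoeffMatrix (m : ℕ) (φ : R[X]) : Matrix (Fin m) (Fin m) R :=
  Matrix.of fun ℓ i => (φ ^ (i : ℕ)).coeff ℓ

lemma X_pow_dvd_jetCurve_comp_sub_map (φ : R[X]) (j : Fin n) :
    X ^ m ∣ (jetCurve m n j).comp (φ.map MvPolynomial.C)
      - mapAlgHom (jetSubst (powCoeffMatrix m φ)) (jetCurve m n j) := by
  refine X_pow_dvd_iff.mpr fun ℓ hℓ => ?_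
  rw [coeff_sub, sub_eq_zero]
  simp only [jetCurve, Polynomial.sum_comp, mul_comp, C_comp, X_pow_comp, map_sum, map_mul,
    coe_mapAlgHom, Polynomial.map_C, Polynomial.map_pow, Polynomial.map_X, finsetSum_coeff,
    coeff_C_mul, coeff_X_pow, mul_ite, mul_one, mul_zero]
  simp_rw [← Polynomial.map_pow, coeff_map]
  rw [sum_eq_single ⟨ℓ, hℓ⟩ (fun i _ hi => if_neg fun h => hi (Fin.ext h.symm)) (by simp),
    if_pos rfl, RingHom.coe_coe, jetSubst_X]
  simp only [powCoeffMatrix, Matrix.of_apply, MvPolynomial.smul_eq_C_mul, mul_comm]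

lemma jetSubst_powCoeffMatrix_jetCoeff {φ : R[X]} (h0 : φ.coeff 0 = 0)
    (f : MvPolynomial (Fin n) R) {ℓ : ℕ} (hℓ : ℓ < m) :
    jetSubst (powCoeffMatrix m φ) (jetCoeff m n f ℓ)
      = ∑ i ∈ range m, (φ ^ i).coeff ℓ • jetCoeff m n f i := by
  set Θ := jetSubst (n := n) (powCoeffMatrix m φ)
  set φ' := φ.map (MvPolynomial.C : R →+* MvPolynomial (Fin m × Fin n) R)
  have hcurves (j : Fin n) : (jetCurve m n j).comp φ' - mapAlgHom Θ (jetCurve m n j)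
      ∈ Ideal.span {X ^ m} :=
    Ideal.mem_span_singleton.mpr (X_pow_dvd_jetCurve_comp_sub_map φ j)
  have hcongr := X_pow_dvd_iff.mp
    (Ideal.mem_span_singleton.mp (MvPolynomial.aeval_sub_aeval_mem hcurves f)) ℓ hℓ
  rw [coeff_sub, sub_eq_zero] at hcongr
  calc Θ (jetCoeff m n f ℓ)
      = (MvPolynomial.aeval (fun j => mapAlgHom Θ (jetCurve m n j)) f).coeff ℓ := by
        rw [jetCoeff_eq_coeff_aeval, ← MvPolynomial.comp_aeval_apply, coe_mapAlgHom, coeff_map]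
        rfl
    _ = (MvPolynomial.aeval (fun j => (jetCurve m n j).comp φ') f).coeff ℓ := hcongr.symm
    _ = ((MvPolynomial.aeval (jetCurve m n) f).comp φ').coeff ℓ := by
        rw [comp_eq_aeval, ← AlgHom.coe_restrictScalars' R (aeval φ'),
          MvPolynomial.comp_aeval_apply]
        rfl
    _ = ∑ i ∈ range m, (φ ^ i).coeff ℓ • jetCoeff m n f i := coeff_comp_map_of_lt h0 _ hℓ

lemma powCoeffMatrix_isLowerTriangular {φ : R[X]} (h0 : φ.coeff 0 = 0) :
    (powCoeffMatrix m φ).IsLowerTriangular :=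
  fun _ _ h => coeff_pow_eq_zero_of_lt h0 h

lemma isUnit_powCoeffMatrix {φ : R[X]} (h0 : φ.coeff 0 = 0) (h1 : φ.coeff 1 = 1) :
    IsUnit (powCoeffMatrix m φ) := by
  have hdiag (i : Fin m) : powCoeffMatrix m φ i i = 1 := by
    rw [powCoeffMatrix, Matrix.of_apply, coeff_pow_self h0, h1, one_pow]
  rw [Matrix.isUnit_iff_isUnit_det, Matrix.det_of_isLowerTriangular _
    (powCoeffMatrix_isLowerTriangular h0), prod_eq_one fun i _ => hdiag i]
  exact isUnit_one

lemma jetSubst_powCoeffMatrix_X_zero {φ : R[X]} (h0 : φ.coeff 0 = 0) (hm : 0 < m)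
    (j : Fin n) :
    jetSubst (powCoeffMatrix m φ) (MvPolynomial.X (⟨0, hm⟩, j))
      = MvPolynomial.X (⟨0, hm⟩, j) := by
  rw [jetSubst_X, sum_eq_single ⟨0, hm⟩]
  · simp [powCoeffMatrix]
  · intro i _ hi
    rw [powCoeffMatrix, Matrix.of_apply,
      coeff_pow_eq_zero_of_lt h0 (Nat.pos_of_ne_zero fun h => hi (Fin.ext h)), zero_smul]
  · simp

lemma jetSubst_sum_smul_jetCoeff {φ : R[X]} (h0 : φ.coeff 0 = 0) (f : MvPolynomial (Fin n) R)
    (A : ℕ → R) :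
    jetSubst (powCoeffMatrix m φ) (∑ ℓ ∈ range m, A ℓ • jetCoeff m n f ℓ)
      = ∑ i ∈ range m, residuePow A m φ i • jetCoeff m n f i := by
  rw [map_sum, sum_congr rfl fun ℓ hℓ => by
    rw [map_smul, jetSubst_powCoeffMatrix_jetCoeff h0 f (mem_range.mp hℓ), smul_sum], sum_comm]
  simp only [residuePow, sum_smul, smul_smul]

end Jets

theorem stmt13 (k : Type*) [Field k] (p : ℕ) [CharP k p]
    (n m : ℕ) (hm : 2 ≤ m) (hpm : m < p)
    (f : MvPolynomial (Fin n) k) (A : ℕ → k) (hA : A (m - 1) ≠ 0) :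
    ∃ (Θ : MvPolynomial (Fin m × Fin n) k ≃ₐ[k] MvPolynomial (Fin m × Fin n) k)
      (b₀ bm : k), bm ≠ 0 ∧
      (∀ j : Fin n,
        Θ (MvPolynomial.X ((⟨0, by omega⟩ : Fin m), j))
          = MvPolynomial.X ((⟨0, by omega⟩ : Fin m), j)) ∧
      Θ (∑ i ∈ Finset.range m, A i • jetCoeff m n f i)
        = b₀ • jetCoeff m n f 0 + bm • jetCoeff m n f (m - 1) := by
  have hchar (i : ℕ) (hi : 0 < i) (him : i < m) : (i : k) ≠ 0 := by
    rw [Ne, CharP.cast_eq_zero_iff k p]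
    exact Nat.not_dvd_of_pos_of_lt hi (him.trans hpm)
  obtain ⟨φ, h0, h1, hφ⟩ := exists_residuePow_eq_zero A hA hchar
  refine ⟨jetSubstEquiv (isUnit_powCoeffMatrix h0 h1).unit, A 0, A (m - 1), hA,
    jetSubst_powCoeffMatrix_X_zero h0 _, ?_⟩
  change jetSubst (powCoeffMatrix m φ) _ = _
  rw [jetSubst_sum_smul_jetCoeff h0, sum_eq_add_of_mem 0 (m - 1) (by simp; omega)
    (by simp; omega) (by omega) fun i hi ⟨hi0, him⟩ => by
      rw [mem_range] at hi
      rw [hφ i (by omega) (by omega), zero_smul],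
    residuePow_zero A (by omega), residuePow_sub_one A h0 h1 (by omega)]
end

section
/- Let k be a field, f in k[x_1,...,x_n], m ≥ 2, b_0 in k and b_{m-1} in k^*. Let W ⊆ k^{mn} be the set of (m-1)-jets x^{(m-1)} with f_1(x^{(1)}) = ... = f_{m-2}(x^{(m-2)}) = 0 and such that the gradient of f at the base point x^{(0)} = (x_{01},...,x_{0n}) is nonzero. Then W is the disjoint union of the sets A_j (j = 1,...,n), where A_j = { x^{(m-1)} in W : ∂f/∂x_i(x^{(0)}) = 0 for all i < j and ∂f/∂x_j(x^{(0)}) ≠ 0 }, and on each A_j the map x^{(m-1)} ↦ (b_0 f_0 + b_{m-1} f_{m-1})(x^{(m-1)}) is surjective onto k with all fibers of equal cardinality when k is finite; indeed translation of the coordinate x_{(m-1)j} by elements of k acts on A_j preserving all f_i for i ≤ m-2 and shifting b_0 f_0 + b_{m-1} f_{m-1} by b_{m-1} * ∂f/∂x_j(x^{(0)}) times the translation amount. -/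
open MvPolynomial

theorem MvPolynomial.exists_aeval_add_single_eq {R S σ : Type*} [CommSemiring R] [CommSemiring S]
    [Algebra R S] [DecidableEq σ] (f : MvPolynomial σ R) (g : σ → S) (j : σ) (h : S) :
    ∃ K : S, aeval (g + Pi.single j h) f = aeval g f + aeval g (pderiv j f) * h + K * h ^ 2 := by
  induction f using MvPolynomial.induction_on with
  | C a => exact ⟨0, by simp⟩
  | add p q hp hq =>
    obtain ⟨Kp, hKp⟩ := hp
    obtain ⟨Kq, hKq⟩ := hq
    exact ⟨Kp + Kq, by simp only [map_add, hKp, hKq]; ring⟩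
  | mul_X p i hp =>
    obtain ⟨K, hK⟩ := hp
    rcases eq_or_ne i j with rfl | hij
    · refine ⟨aeval g (pderiv i p) + K * (g i + h), ?_⟩
      simp only [map_mul, aeval_X, hK, Pi.add_apply, Pi.single_eq_same, Derivation.leibniz,
        pderiv_X_self, smul_eq_mul, map_add, mul_one]
      ring
    · refine ⟨K * g i, ?_⟩
      simp only [map_mul, aeval_X, hK, Pi.add_apply, Pi.single_eq_of_ne hij, Derivation.leibniz,
        pderiv_X_of_ne hij, smul_eq_mul, map_add, map_zero, mul_zero, add_zero]
      ring

theorem Function.update_add_eq_add_single {ι M : Type*} [DecidableEq ι] [AddZeroClass M]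
    (x : ι → M) (p : ι) (z : M) : Function.update x p (x p + z) = x + Pi.single p z := by
  funext q
  rcases eq_or_ne q p with rfl | hq <;> simp [*]

section Jet

variable {R σ : Type*} [CommRing R] {m n : ℕ}

noncomputable def jetArc (x : Fin m × σ → R) (j : σ) : Polynomial R :=
  ∑ i : Fin m, Polynomial.C (x (i, j)) * Polynomial.X ^ (i : ℕ)

lemma jetArc_add (x y : Fin m × σ → R) : jetArc (x + y) = jetArc x + jetArc y := by
  funext j
  simp only [jetArc, Pi.add_apply, map_add, add_mul, Finset.sum_add_distrib]

lemma jetArc_single [DecidableEq σ] (i : Fin m) (j : σ) (z : R) :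
    jetArc (Pi.single (i, j) z) = Pi.single j (Polynomial.C z * Polynomial.X ^ (i : ℕ)) := by
  funext j'
  rcases eq_or_ne j' j with rfl | hj
  · rw [Pi.single_eq_same, jetArc, Finset.sum_eq_single i]
    · simp
    · intro i' _ hi'
      simp [hi']
    · simp
  · simp [jetArc, hj]

lemma eval_jetArc_zero (x : Fin m × σ → R) (j : σ) (hm : 0 < m) :
    (jetArc x j).eval 0 = x (⟨0, hm⟩, j) := by
  rw [jetArc, Polynomial.eval_finsetSum, Finset.sum_eq_single ⟨0, hm⟩]
  · simp
  · intro i _ hi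
    have : (i : ℕ) ≠ 0 := fun h => hi (Fin.ext h)
    simp [this]
  · simp

lemma coeff_zero_aeval_jetArc (h : MvPolynomial σ R) (x : Fin m × σ → R) (hm : 0 < m) :
    (aeval (jetArc x) h).coeff 0 = eval (fun j => x (⟨0, hm⟩, j)) h := by
  rw [Polynomial.coeff_zero_eq_aeval_zero, ← AlgHom.comp_apply, comp_aeval, ← aeval_eq_eval]
  simp only [Polynomial.coe_aeval_eq_eval, eval_jetArc_zero x _ hm]

lemma eval_jetCoeff (f : MvPolynomial (Fin n) R) (x : Fin m × Fin n → R) (ℓ : ℕ) :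
    eval x (jetCoeff m n f ℓ) = (aeval (jetArc x) f).coeff ℓ := by
  rw [jetCoeff, ← Polynomial.coeff_map]
  change (Polynomial.mapAlgHom (aeval x) _).coeff ℓ = _
  rw [← AlgHom.comp_apply, comp_aeval]
  simp only [map_sum, Polynomial.coe_mapAlgHom, coe_aeval_eq_eval, Polynomial.map_mul,
    Polynomial.map_C, eval_X, Polynomial.map_pow, Polynomial.map_X]
  rfl

lemma eval_jetCoeff_add_single (f : MvPolynomial (Fin n) R) (x : Fin m × Fin n → R)
    (i : Fin m) (j : Fin n) (z : R) {ℓ : ℕ} (hℓ : ℓ < 2 * i) :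
    eval (x + Pi.single (i, j) z) (jetCoeff m n f ℓ) = eval x (jetCoeff m n f ℓ) +
      if (i : ℕ) ≤ ℓ then (aeval (jetArc x) (pderiv j f)).coeff (ℓ - i) * z else 0 := by
  obtain ⟨K, hK⟩ :=
    exists_aeval_add_single_eq f (jetArc x) j (Polynomial.C z * Polynomial.X ^ (i : ℕ))
  have hsq : ¬(i : ℕ) * 2 ≤ ℓ := by omega
  rw [eval_jetCoeff, eval_jetCoeff, jetArc_add, jetArc_single, hK, ← mul_assoc, mul_pow, ← pow_mul,
    ← mul_assoc, Polynomial.coeff_add, Polynomial.coeff_add, Polynomial.coeff_mul_X_pow',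
    Polynomial.coeff_mul_X_pow', if_neg hsq, add_zero, Polynomial.coeff_mul_C]

lemma eval_jetCoeff_add_single_of_lt (f : MvPolynomial (Fin n) R) (x : Fin m × Fin n → R)
    (i : Fin m) (j : Fin n) (z : R) {ℓ : ℕ} (hℓ : ℓ < i) :
    eval (x + Pi.single (i, j) z) (jetCoeff m n f ℓ) = eval x (jetCoeff m n f ℓ) := by
  rw [eval_jetCoeff_add_single f x i j z (by omega), if_neg (by omega), add_zero]

lemma eval_jetCoeff_add_single_self (f : MvPolynomial (Fin n) R) (x : Fin m × Fin n → R)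
    (i : Fin m) (j : Fin n) (z : R) (hi : 0 < (i : ℕ)) :
    eval (x + Pi.single (i, j) z) (jetCoeff m n f i) =
      eval x (jetCoeff m n f i) + eval (fun j' => x (⟨0, i.pos⟩, j')) (pderiv j f) * z := by
  rw [eval_jetCoeff_add_single f x i j z (by omega), if_pos le_rfl, Nat.sub_self,
    coeff_zero_aeval_jetArc]

end Jet

section Translation

variable {k V : Type*} [DivisionRing k] [AddMonoid V] {S : Set V} {τ : k →+ V} {v a : V → k}

theorem exists_mem_eq_of_translate (hS : ∀ x ∈ S, ∀ z, x + τ z ∈ S)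
    (hv : ∀ x ∈ S, ∀ z, v (x + τ z) = v x + a x * z) (ha₀ : ∀ x ∈ S, a x ≠ 0)
    (hne : S.Nonempty) (c : k) : ∃ x ∈ S, v x = c := by
  obtain ⟨x, hx⟩ := hne
  refine ⟨x + τ ((a x)⁻¹ * (c - v x)), hS x hx _, ?_⟩
  rw [hv x hx, mul_inv_cancel_left₀ (ha₀ x hx), add_sub_cancel]

theorem natCard_fiber_eq_of_translate (hS : ∀ x ∈ S, ∀ z, x + τ z ∈ S)
    (hv : ∀ x ∈ S, ∀ z, v (x + τ z) = v x + a x * z)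
    (ha : ∀ x ∈ S, ∀ z, a (x + τ z) = a x) (ha₀ : ∀ x ∈ S, a x ≠ 0) (c c' : k) :
    Nat.card {x // x ∈ S ∧ v x = c} = Nat.card {x // x ∈ S ∧ v x = c'} := by
  let shift (d d' : k) : {x // x ∈ S ∧ v x = d} → {x // x ∈ S ∧ v x = d'} :=
    fun x => ⟨x + τ ((a x)⁻¹ * (d' - d)), hS x x.2.1 _, by
      rw [hv x x.2.1, x.2.2, mul_inv_cancel_left₀ (ha₀ x x.2.1), add_sub_cancel]⟩
  have shift_shift : ∀ d d' (x : {x // x ∈ S ∧ v x = d}), shift d' d (shift d d' x) = x := by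
    rintro d d' ⟨x, hx, rfl⟩
    ext1
    simp only [shift, ha x hx, add_assoc, ← map_add, ← mul_add, sub_add_sub_cancel, sub_self,
      mul_zero, map_zero, add_zero]
  exact Nat.card_congr ⟨shift c c', shift c' c, shift_shift c c', shift_shift c' c⟩

end Translation

section FirstNonzero

open Function

variable {ι α M : Type*} [LinearOrder ι] [Zero M]

def firstNonzeroStratum (W : Set α) (g : ι → α → M) (j : ι) : Set α :=
  {x ∈ W | (∀ i < j, g i x = 0) ∧ g j x ≠ 0}

theorem eq_iUnion_firstNonzeroStratum [WellFoundedLT ι] (W : Set α) (g : ι → α → M)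
    (hW : ∀ x ∈ W, ∃ j, g j x ≠ 0) :
    W = ⋃ j, firstNonzeroStratum W g j := by
  refine Set.Subset.antisymm (fun x hx => ?_) (Set.iUnion_subset fun _ _ hx => hx.1)
  obtain ⟨j, hj⟩ := exists_minimal_of_wellFoundedLT (fun j => g j x ≠ 0) (hW x hx)
  exact Set.mem_iUnion.2 ⟨j, hx, fun i hij => not_not.1 (hj.not_prop_of_lt hij), hj.prop⟩

theorem pairwise_disjoint_firstNonzeroStratum (W : Set α) (g : ι → α → M) :
    Pairwise (Disjoint on firstNonzeroStratum W g) := by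
  intro j j' hjj'
  rw [onFun, Set.disjoint_left]
  rintro x ⟨-, hx, hxj⟩ ⟨-, hx', hxj'⟩
  rcases hjj'.lt_or_gt with h | h
  · exact hxj (hx' j h)
  · exact hxj' (hx j' h)

end FirstNonzero

theorem stmt15 (k : Type*) [Field k] (n m : ℕ) (hm : 2 ≤ m)
    (f : MvPolynomial (Fin n) k) (b₀ b : k) (hb : b ≠ 0) :
    let jet : ℕ → MvPolynomial (Fin m × Fin n) k := jetCoeff m n f
    let grad : Fin n → (Fin m × Fin n → k) → k := fun j x =>
      MvPolynomial.eval (fun j' => x ((⟨0, by omega⟩ : Fin m), j')) (MvPolynomial.pderiv j f)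
    let W : Set (Fin m × Fin n → k) :=
      {x | (∀ ℓ, 1 ≤ ℓ → ℓ ≤ m - 2 → MvPolynomial.eval x (jet ℓ) = 0) ∧ ∃ j, grad j x ≠ 0}
    let A : Fin n → Set (Fin m × Fin n → k) := fun j =>
      {x ∈ W | (∀ i, i < j → grad i x = 0) ∧ grad j x ≠ 0}
    let v : (Fin m × Fin n → k) → k := fun x =>
      MvPolynomial.eval x (b₀ • jet 0 + b • jet (m - 1))
    (W = ⋃ j, A j) ∧
    (∀ j j', j ≠ j' → Disjoint (A j) (A j')) ∧
    (∀ j, ∀ x ∈ A j, ∀ z : k,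
      Function.update x ((⟨m - 1, by omega⟩ : Fin m), j)
          (x ((⟨m - 1, by omega⟩ : Fin m), j) + z) ∈ A j ∧
      (∀ ℓ, ℓ ≤ m - 2 →
        MvPolynomial.eval (Function.update x ((⟨m - 1, by omega⟩ : Fin m), j)
          (x ((⟨m - 1, by omega⟩ : Fin m), j) + z)) (jet ℓ) = MvPolynomial.eval x (jet ℓ)) ∧
      v (Function.update x ((⟨m - 1, by omega⟩ : Fin m), j)
          (x ((⟨m - 1, by omega⟩ : Fin m), j) + z))
        = v x + b * grad j x * z) ∧
    (Finite k → ∀ j,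
      ((A j).Nonempty → ∀ c : k, ∃ x ∈ A j, v x = c) ∧
      ∀ c c' : k,
        Nat.card {x : Fin m × Fin n → k // x ∈ A j ∧ v x = c} =
          Nat.card {x : Fin m × Fin n → k // x ∈ A j ∧ v x = c'}) := by
  intro jet grad W A v
  simp only [Function.update_add_eq_add_single]
  have hgrad : ∀ i j (x : Fin m × Fin n → k) z,
      grad i (x + Pi.single ((⟨m - 1, by omega⟩ : Fin m), j) z) = grad i x := by
    intro i j x z
    have h0 : (0 : ℕ) ≠ m - 1 := by omega
    simp only [grad, Pi.add_apply, Pi.single_apply, Prod.mk.injEq, Fin.mk.injEq, h0, false_and,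
      if_false, add_zero]
  have hjet : ∀ j (x : Fin m × Fin n → k) z ℓ, ℓ ≤ m - 2 →
      eval (x + Pi.single ((⟨m - 1, by omega⟩ : Fin m), j) z) (jet ℓ) = eval x (jet ℓ) :=
    fun j x z ℓ hℓ => eval_jetCoeff_add_single_of_lt f x _ j z (show ℓ < m - 1 by omega)
  have hv : ∀ j (x : Fin m × Fin n → k) z,
      v (x + Pi.single ((⟨m - 1, by omega⟩ : Fin m), j) z) = v x + b * grad j x * z := by
    intro j x z
    simp only [v, map_add, smul_eval]
    rw [hjet j x z 0 (Nat.zero_le _),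
      eval_jetCoeff_add_single_self f x ⟨m - 1, by omega⟩ j z (show 0 < m - 1 by omega)]
    ring
  have hA : ∀ j, ∀ x ∈ A j, ∀ z,
      x + AddMonoidHom.single _ ((⟨m - 1, by omega⟩ : Fin m), j) z ∈ A j := by
    rintro j x ⟨⟨hjets, -⟩, hlow, hj⟩ z
    simp only [A, W, Set.mem_ofPred_eq, AddMonoidHom.single_apply, hgrad]
    exact ⟨⟨fun ℓ h₁ h₂ => (hjet j x z ℓ h₂).trans (hjets ℓ h₁ h₂), j, hj⟩, hlow, hj⟩
  refine ⟨eq_iUnion_firstNonzeroStratum W grad fun x hx => hx.2,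
    pairwise_disjoint_firstNonzeroStratum W grad,
    fun j x hx z => ⟨hA j x hx z, fun ℓ => hjet j x z ℓ, hv j x z⟩, fun _ j => ?_⟩
  have ha₀ : ∀ x ∈ A j, b * grad j x ≠ 0 := fun x hx => mul_ne_zero hb hx.2.2
  exact ⟨exists_mem_eq_of_translate (hA j) (fun x _ => hv j x) ha₀,
    natCard_fiber_eq_of_translate (hA j) (fun x _ => hv j x)
      (fun x _ z => congrArg (b * ·) (hgrad j j x z)) ha₀⟩
end
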